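/- arXiv:math/0611124 — 10 statements merged into one kernel-verified Lean document; each statement's English description precedes it below -/
import Mathlib

section
/- Let G be a group and let a, b ∈ G satisfy the braid relation a*b*a = b*a*b. Then for every integer n ≥ 1, (a*b)^(6n) = a^2 * (b*a)^(6n-3) * b * a^2 * b. -/
/-- If `a, b` satisfy the braid relation, then for every `n ≥ 1`,
`(a*b)^(6n) = a^2 * (b*a)^(6n-3) * b * a^2 * b`. -/
theorem braid_word_identity_one {G : Type*} [Group G] (a b : G)
    (hbraid : a * b * a = b * a * b) :
    ∀ n : ℕ, 1 ≤ n →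
      (a * b) ^ (6 * n) = a ^ 2 * (b * a) ^ (6 * n - 3) * b * a ^ 2 * b := by
  have hd1 : b * (a * b * a) = (a * b * a) * a := by
    calc b * (a * b * a) = (b * a * b) * a := by group
      _ = (a * b * a) * a := by rw [← hbraid]
  have hd2 : a * (a * b * a) = (a * b * a) * b := by
    calc a * (a * b * a) = a * (b * a * b) := by rw [hbraid]
      _ = (a * b * a) * b := by group
  have hcube : (b * a) ^ 3 = (a * b * a) * (a * b * a) := by
    calc (b * a) ^ 3 = (b * a * b) * (a * b * a) := by simp [pow_succ, mul_assoc]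
      _ = (a * b * a) * (a * b * a) := by rw [← hbraid]
  have hcomm : Commute a ((b * a) ^ 3) := by
    show a * (b * a) ^ 3 = (b * a) ^ 3 * a
    rw [hcube]
    calc a * ((a * b * a) * (a * b * a)) = (a * (a * b * a)) * (a * b * a) := by group
      _ = ((a * b * a) * b) * (a * b * a) := by rw [hd2]
      _ = (a * b * a) * (b * (a * b * a)) := by group
      _ = (a * b * a) * ((a * b * a) * a) := by rw [hd1]
      _ = ((a * b * a) * (a * b * a)) * a := by group
  have hsq : (b * a) ^ 2 = a * b * a ^ 2 := by
    calc (b * a) ^ 2 = (b * a * b) * a := by simp [pow_succ, mul_assoc]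
      _ = (a * b * a) * a := by rw [← hbraid]
      _ = a * b * a ^ 2 := by simp [pow_two, mul_assoc]
  have hpow : ∀ m : ℕ, (a * b) ^ (m + 1) = a * (b * a) ^ m * b := by
    intro m
    induction m with
    | zero => group
    | succ k ih =>
      calc (a * b) ^ (k + 1 + 1) = (a * b) ^ (k + 1) * (a * b) := by rw [pow_succ]
        _ = a * (b * a) ^ k * b * (a * b) := by rw [ih]
        _ = a * ((b * a) ^ k * (b * a)) * b := by group
        _ = a * (b * a) ^ (k + 1) * b := by rw [← pow_succ]
  intro n hn
  obtain ⟨k, rfl⟩ := Nat.exists_eq_add_of_le hn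
  have e1 : 6 * (1 + k) = (3 * (2 * k + 1) + 2) + 1 := by ring
  have e2 : 6 * (1 + k) - 3 = 3 * (2 * k + 1) := by omega
  have hcm : (b * a) ^ (3 * (2 * k + 1)) * a = a * (b * a) ^ (3 * (2 * k + 1)) := by
    rw [pow_mul]
    exact ((hcomm.pow_right (2 * k + 1)).eq).symm
  rw [e2, e1, hpow]
  calc a * (b * a) ^ (3 * (2 * k + 1) + 2) * b
      = a * ((b * a) ^ (3 * (2 * k + 1)) * (b * a) ^ 2) * b := by rw [pow_add]
    _ = a * ((b * a) ^ (3 * (2 * k + 1)) * (a * b * a ^ 2)) * b := by rw [hsq]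
    _ = a * ((b * a) ^ (3 * (2 * k + 1)) * a) * (b * a ^ 2 * b) := by group
    _ = a * (a * (b * a) ^ (3 * (2 * k + 1))) * (b * a ^ 2 * b) := by rw [hcm]
    _ = a ^ 2 * (b * a) ^ (3 * (2 * k + 1)) * b * a ^ 2 * b := by simp [pow_two, mul_assoc]
end

section
/- Let G be a group and let a, b ∈ G satisfy the braid relation a*b*a = b*a*b. Then for every integer n ≥ 1, (a*b)^(6n) = a^3 * (b*a)^(6n-4) * b^2 * a^2 * b. -/
section Aux

variable {G : Type*} [Group G] (a b : G)

private lemma braid_aux_H1 (hbraid : a * b * a = b * a * b) :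
    ∀ x : G, a * (b * (a * x)) = b * (a * (b * x)) := by
  intro x
  rw [← mul_assoc, ← mul_assoc, hbraid, mul_assoc, mul_assoc]

private lemma braid_aux_base (hbraid : a * b * a = b * a * b) :
    (a * b) ^ 6 = a ^ 3 * (b * a) ^ 2 * b ^ 2 * a ^ 2 * b := by
  have H1 := braid_aux_H1 a b hbraid
  simp only [pow_succ, pow_zero, one_mul, mul_assoc]
  rw [← H1 (a * (b * (a * (b * (a * (b * (a * b)))))))]
  rw [H1 (b * (a * (b * (a * b))))]
  rw [← H1 (a * (b * (b * (a * (b * (a * b))))))]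
  rw [← H1 (a * b)]
  rw [H1 (b * (a * (a * b)))]

private lemma braid_aux_hca (hbraid : a * b * a = b * a * b) :
    a * b * a * a = b * (a * b * a) := by
  calc a * b * a * a = b * a * b * a := by rw [hbraid]
    _ = b * (a * b * a) := by group

private lemma braid_aux_hcb (hbraid : a * b * a = b * a * b) :
    a * b * a * b = a * (a * b * a) := by
  have : a * (b * a * b) = a * (a * b * a) := by rw [← hbraid]
  calc a * b * a * b = a * (b * a * b) := by group
    _ = a * (a * b * a) := this

private lemma braid_aux_comm_a (hbraid : a * b * a = b * a * b) :
    Commute ((a * b * a) * (a * b * a)) a := by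
  show _ = _
  calc (a * b * a) * (a * b * a) * a = (a * b * a) * (a * b * a * a) := by group
    _ = (a * b * a) * (b * (a * b * a)) := by rw [braid_aux_hca a b hbraid]
    _ = (a * b * a * b) * (a * b * a) := by group
    _ = (a * (a * b * a)) * (a * b * a) := by rw [braid_aux_hcb a b hbraid]
    _ = a * ((a * b * a) * (a * b * a)) := by group

private lemma braid_aux_comm_b (hbraid : a * b * a = b * a * b) :
    Commute ((a * b * a) * (a * b * a)) b := by
  show _ = _
  calc (a * b * a) * (a * b * a) * b = (a * b * a) * (a * b * a * b) := by group
    _ = (a * b * a) * (a * (a * b * a)) := by rw [braid_aux_hcb a b hbraid]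
    _ = (a * b * a * a) * (a * b * a) := by group
    _ = (b * (a * b * a)) * (a * b * a) := by rw [braid_aux_hca a b hbraid]
    _ = b * ((a * b * a) * (a * b * a)) := by group

private lemma braid_aux_h6 (hbraid : a * b * a = b * a * b) :
    (a * b) ^ 6 = ((a * b * a) * (a * b * a)) ^ 2 := by
  have h3 : (a * b) ^ 3 = (a * b * a) * (a * b * a) := by
    calc (a * b) ^ 3 = a * b * a * (b * a * b) := by
          rw [pow_succ, pow_succ, pow_one]; group
      _ = a * b * a * (a * b * a) := by rw [← hbraid]
  rw [show (6 : ℕ) = 3 * 2 from rfl, pow_mul, h3]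

end Aux

/-- If `a, b` satisfy the braid relation, then for every `n ≥ 1`,
`(a*b)^(6n) = a^3 * (b*a)^(6n-4) * b^2 * a^2 * b`. -/
theorem braid_word_identity_two {G : Type*} [Group G] (a b : G)
    (hbraid : a * b * a = b * a * b) :
    ∀ n : ℕ, 1 ≤ n →
      (a * b) ^ (6 * n) = a ^ 3 * (b * a) ^ (6 * n - 4) * b ^ 2 * a ^ 2 * b := by
  have ha6 : Commute ((a * b) ^ 6) a := by
    rw [braid_aux_h6 a b hbraid]
    exact (braid_aux_comm_a a b hbraid).pow_left 2
  have hb6 : Commute ((a * b) ^ 6) b := by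
    rw [braid_aux_h6 a b hbraid]
    exact (braid_aux_comm_b a b hbraid).pow_left 2
  have hba6 : (b * a) ^ 6 = (a * b) ^ 6 := by
    have h : (b * a) ^ 6 * b = b * (a * b) ^ 6 := by
      induction' (6 : ℕ) with k ihk
      · simp
      · rw [pow_succ, pow_succ']
        calc (b * a) ^ k * (b * a) * b = (b * a) ^ k * b * (a * b) := by group
          _ = b * (a * b) ^ k * (a * b) := by rw [ihk]
          _ = b * ((a * b) * (a * b) ^ k) := by
              rw [mul_assoc, ← pow_succ, ← pow_succ']
    have h2 : (b * a) ^ 6 * b = (a * b) ^ 6 * b := by rw [h, hb6.eq]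
    exact mul_right_cancel h2
  intro n hn
  obtain ⟨m, rfl⟩ := Nat.exists_eq_add_of_le hn
  induction m with
  | zero => simpa using braid_aux_base a b hbraid
  | succ k ih =>
    have e2 : 6 * (1 + (k + 1)) = 6 * (1 + k) + 6 := by omega
    have e1 : 6 * (1 + (k + 1)) - 4 = (6 * (1 + k) - 4) + 6 := by omega
    rw [e1, e2, pow_add, pow_add, ih (Nat.le_add_right 1 k)]
    rw [hba6]
    have hw : Commute ((a * b) ^ 6) (b ^ 2 * a ^ 2 * b) :=
      ((hb6.pow_right 2).mul_right (ha6.pow_right 2)).mul_right hb6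
    have final : ∀ X : G, a ^ 3 * X * b ^ 2 * a ^ 2 * b * (a * b) ^ 6
        = a ^ 3 * (X * (a * b) ^ 6) * b ^ 2 * a ^ 2 * b := by
      intro X
      calc a ^ 3 * X * b ^ 2 * a ^ 2 * b * (a * b) ^ 6
          = a ^ 3 * X * ((b ^ 2 * a ^ 2 * b) * (a * b) ^ 6) := by group
        _ = a ^ 3 * X * ((a * b) ^ 6 * (b ^ 2 * a ^ 2 * b)) := by rw [← hw.eq]
        _ = a ^ 3 * (X * (a * b) ^ 6) * b ^ 2 * a ^ 2 * b := by group
    exact final _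
end

section
/- Let G be a group and let a, b ∈ G satisfy the braid relation a*b*a = b*a*b. Then for every integer n ≥ 1, (a*b)^(6n) = a^4 * (b*a)^(6n-6) * b * a^2 * b^2 * a^2 * b. -/
/-- If `a, b` satisfy the braid relation, then for every `n ≥ 1`,
`(a*b)^(6n) = a^4 * (b*a)^(6n-6) * b * a^2 * b^2 * a^2 * b`. -/
theorem braid_word_identity_three {G : Type*} [Group G] (a b : G)
    (hbraid : a * b * a = b * a * b) :
    ∀ n : ℕ, 1 ≤ n →
      (a * b) ^ (6 * n) =
        a ^ 4 * (b * a) ^ (6 * n - 6) * b * a ^ 2 * b ^ 2 * a ^ 2 * b := by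
  -- conjugation by c = a*b*a swaps a and b
  have h1 : (a * b * a) * a = b * (a * b * a) := by
    conv_lhs => rw [hbraid]
    simp [mul_assoc]
  have h2 : (a * b * a) * b = a * (a * b * a) := by
    conv_lhs => rw [show (a*b*a)*b = a*(b*a*b) by simp [mul_assoc], ← hbraid]
  have hcc : (a * b) ^ 3 = (a * b * a) * (a * b * a) := by
    rw [show ((a*b)^3 : G) = (a*b*a) * (b*a*b) by simp [pow_succ, mul_assoc], ← hbraid]
  have hcc' : (b * a) ^ 3 = (a * b * a) * (a * b * a) := by
    rw [show ((b*a)^3 : G) = (b*a*b) * (a*b*a) by simp [pow_succ, mul_assoc], ← hbraid]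
  have hca : Commute a ((a * b) ^ 3) := by
    unfold Commute SemiconjBy
    rw [hcc]
    calc a * ((a*b*a) * (a*b*a)) = (a * (a*b*a)) * (a*b*a) := by simp [mul_assoc]
      _ = ((a*b*a) * b) * (a*b*a) := by rw [h2]
      _ = (a*b*a) * (b * (a*b*a)) := by simp [mul_assoc]
      _ = (a*b*a) * ((a*b*a) * a) := by rw [h1]
      _ = (a*b*a) * (a*b*a) * a := by simp [mul_assoc]
  -- base case pieces
  have hab3 : (a * b) ^ 3 = a^2 * b * a^2 * b := by
    calc (a*b)^3 = a * (b*a*b) * (a*b) := by simp [pow_succ, mul_assoc]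
      _ = a * (a*b*a) * (a*b) := by rw [← hbraid]
      _ = a^2 * b * a^2 * b := by simp [pow_succ, mul_assoc]
  have base : (a * b) ^ 6 = a ^ 4 * b * a ^ 2 * b ^ 2 * a ^ 2 * b := by
    have hc2 : a ^ 2 * (a*b)^3 = (a*b)^3 * a ^ 2 := (hca.pow_left 2).eq
    calc (a*b)^6 = (a*b)^3 * (a*b)^3 := by rw [← pow_add]
      _ = ((a*b)^3 * a^2) * (b * a^2 * b) := by rw [hab3]; simp [mul_assoc]
      _ = (a^2 * (a*b)^3) * (b * a^2 * b) := by rw [← hc2]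
      _ = a^2 * (a^2 * b * a^2 * b) * (b * a^2 * b) := by rw [hab3]
      _ = a ^ 4 * b * a ^ 2 * b ^ 2 * a ^ 2 * b := by simp [pow_succ, mul_assoc]
  intro n hn
  obtain ⟨m, rfl⟩ := Nat.exists_eq_add_of_le hn
  have hsub : 6 * (1 + m) - 6 = 6 * m := by omega
  rw [hsub]
  have hpow : (b * a) ^ (6 * m) = ((a * b) ^ 3) ^ (2 * m) := by
    rw [show 6 * m = 3 * (2 * m) by ring, pow_mul, hcc', ← hcc]
  have hcomm4 : a ^ 4 * ((a * b) ^ 3) ^ (2 * m) = ((a * b) ^ 3) ^ (2 * m) * a ^ 4 :=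
    ((hca.pow_right (2 * m)).pow_left 4).eq
  calc (a * b) ^ (6 * (1 + m))
      = ((a*b)^3)^(2*m) * (a*b)^6 := by
        rw [show 6 * (1 + m) = 3 * (2 * m) + 6 by ring, pow_add, pow_mul]
    _ = ((a*b)^3)^(2*m) * (a^4 * b * a^2 * b^2 * a^2 * b) := by rw [base]
    _ = (a^4 * ((a*b)^3)^(2*m)) * (b * a^2 * b^2 * a^2 * b) := by
        rw [hcomm4]; simp [mul_assoc]
    _ = a ^ 4 * (b * a) ^ (6 * m) * b * a ^ 2 * b ^ 2 * a ^ 2 * b := by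
        rw [hpow]; simp [mul_assoc]
end

section
/- Let G be a group and let a, b ∈ G satisfy the braid relation a*b*a = b*a*b. Then for every integer n ≥ 1, (a*b)^(6n) = a^(4n) * b * (a^2 * b^2)^(2n-1) * a^2 * b. -/
/-- If `a, b` satisfy the braid relation, then for every `n ≥ 1`,
`(a*b)^(6n) = a^(4n) * b * (a^2 * b^2)^(2n-1) * a^2 * b`. -/
theorem braid_word_identity_main {G : Type*} [Group G] (a b : G)
    (hbraid : a * b * a = b * a * b) :
    ∀ n : ℕ, 1 ≤ n →
      (a * b) ^ (6 * n) =
        a ^ (4 * n) * b * (a ^ 2 * b ^ 2) ^ (2 * n - 1) * a ^ 2 * b := by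
  have h1 : ∀ x : G, a * (b * (a * x)) = b * (a * (b * x)) := by
    intro x
    calc a * (b * (a * x)) = (a * b * a) * x := by simp only [pow_succ, pow_zero, one_mul, mul_assoc]
    _ = (b * a * b) * x := by rw [hbraid]
    _ = b * (a * (b * x)) := by simp only [pow_succ, pow_zero, one_mul, mul_assoc]
  have h1' : ∀ x : G, b * (a * (b * x)) = a * (b * (a * x)) := fun x => (h1 x).symm
  have h2 : a * (b * a) = b * (a * b) := by
    rw [← mul_assoc, hbraid, mul_assoc]
  have h2' : b * (a * b) = a * (b * a) := h2.symm
  have base : (a * b) ^ 6 = a ^ 4 * b * a ^ 2 * b ^ 2 * a ^ 2 * b := by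
    calc (a * b) ^ 6
        = a * (b * (a * (b * (a * (b * (a * (b * (a * (b * (a * (b))))))))))) := by simp only [pow_succ, pow_zero, one_mul, mul_assoc]
    _ = a * (a * (b * (a * (a * (b * (a * (b * (a * (b * (a * (b))))))))))) := by rw [h1' (a * (b * (a * (b * (a * (b * (a * (b))))))))]
    _ = a * (a * (b * (a * (b * (a * (b * (b * (a * (b * (a * (b))))))))))) := by rw [h1 (b * (a * (b * (a * (b)))))]
    _ = a * (a * (a * (b * (a * (a * (b * (b * (a * (b * (a * (b))))))))))) := by rw [h1' (a * (b * (b * (a * (b * (a * (b)))))))]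
    _ = a * (a * (a * (b * (a * (a * (b * (a * (b * (a * (a * (b))))))))))) := by rw [h1' (a * (b))]
    _ = a * (a * (a * (b * (a * (b * (a * (b * (b * (a * (a * (b))))))))))) := by rw [h1 (b * (a * (a * (b))))]
    _ = a * (a * (a * (a * (b * (a * (a * (b * (b * (a * (a * (b))))))))))) := by rw [h1' (a * (b * (b * (a * (a * (b))))))]
    _ = a ^ 4 * b * a ^ 2 * b ^ 2 * a ^ 2 * b := by simp only [pow_succ, pow_zero, one_mul, mul_assoc]
  have hcomm : a * (a * b) ^ 6 = (a * b) ^ 6 * a := by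
    calc a * (a * b) ^ 6
        = a * (a * (b * (a * (b * (a * (b * (a * (b * (a * (b * (a * (b)))))))))))) := by simp only [pow_succ, pow_zero, one_mul, mul_assoc]
    _ = a * (b * (a * (b * (b * (a * (b * (a * (b * (a * (b * (a * (b)))))))))))) := by rw [h1 (b * (a * (b * (a * (b * (a * (b * (a * (b)))))))))]
    _ = a * (b * (a * (b * (a * (b * (a * (a * (b * (a * (b * (a * (b)))))))))))) := by rw [h1' (a * (b * (a * (b * (a * (b))))))]
    _ = a * (b * (a * (b * (a * (b * (a * (b * (a * (b * (b * (a * (b)))))))))))) := by rw [h1 (b * (a * (b)))]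
    _ = a * (b * (a * (b * (a * (b * (a * (b * (a * (b * (a * (b * (a)))))))))))) := by rw [h2']
    _ = (a * b) ^ 6 * a := by simp only [pow_succ, pow_zero, one_mul, mul_assoc]
  have ca : Commute a ((a * b) ^ 6) := hcomm
  intro n hn
  induction n, hn using Nat.le_induction with
  | base =>
      calc (a * b) ^ (6 * 1) = (a * b) ^ 6 := by norm_num
      _ = a ^ 4 * b * a ^ 2 * b ^ 2 * a ^ 2 * b := base
      _ = a ^ (4 * 1) * b * (a ^ 2 * b ^ 2) ^ (2 * 1 - 1) * a ^ 2 * b := by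
            norm_num [mul_assoc]
  | succ n hn ih =>
      have can : Commute (a ^ 4) ((a * b) ^ (6 * n)) := by
        rw [pow_mul]
        exact (ca.pow_right n).pow_left 4
      have e1 : 6 * (n + 1) = 6 * n + 6 := by ring
      have e2 : 2 * (n + 1) - 1 = (2 * n - 1) + 2 := by omega
      have e3 : 4 * (n + 1) = 4 + 4 * n := by ring
      calc (a * b) ^ (6 * (n + 1))
          = (a * b) ^ (6 * n) * (a * b) ^ 6 := by rw [e1, pow_add]
      _ = (a * b) ^ (6 * n) * (a ^ 4 * (b * a ^ 2 * b ^ 2 * a ^ 2 * b)) := by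
            rw [base]; simp only [mul_assoc]
      _ = a ^ 4 * (a * b) ^ (6 * n) * (b * a ^ 2 * b ^ 2 * a ^ 2 * b) := by
            rw [← mul_assoc, can.eq]
      _ = a ^ 4 * (a ^ (4 * n) * b * (a ^ 2 * b ^ 2) ^ (2 * n - 1) * a ^ 2 * b) *
            (b * a ^ 2 * b ^ 2 * a ^ 2 * b) := by rw [ih]
      _ = a ^ (4 + 4 * n) * b * ((a ^ 2 * b ^ 2) ^ (2 * n - 1) * (a ^ 2 * b ^ 2) ^ 2) *
            a ^ 2 * b := by
            simp only [pow_succ, pow_zero, one_mul, pow_add, mul_assoc]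
      _ = a ^ (4 * (n + 1)) * b * (a ^ 2 * b ^ 2) ^ (2 * (n + 1) - 1) * a ^ 2 * b := by
            rw [← pow_add, ← e2, ← e3]
end

section
/- Let G be a group and let a, b ∈ G satisfy the braid relation a*b*a = b*a*b. Then for every integer n ≥ 1, a^(4n) * (a*b)^(6n) * a^(-4n) = a^(8n) * b * (∏_{i=1}^{2n-1} a^(2i) * b^2 * a^(-2i)) * (a^(4n) * b * a^(-4n)), where the product is taken in increasing order of i. -/
section
variable {G : Type*} [Group G] (a b : G)

lemma braid_cube (hbraid : a * b * a = b * a * b) :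
    (a*b)^3 = a^2*b*(a^2*b) := by
  calc (a*b)^3 = a*(b*a*b)*(a*b) := by simp [pow_succ, mul_assoc]
    _ = a*(a*b*a)*(a*b) := by rw [hbraid]
    _ = a^2*b*(a^2*b) := by simp [pow_two, mul_assoc]

lemma braid_comm (hbraid : a * b * a = b * a * b) :
    Commute ((a*b)^3) a := by
  have hDa : (a*b*a)*a = b*(a*b*a) := by
    rw [show b*(a*b*a) = (b*a*b)*a by simp [mul_assoc], ← hbraid]
  have hDb : (a*b*a)*b = a*(a*b*a) := by
    rw [show (a*b*a)*b = a*(b*a*b) by simp [mul_assoc], ← hbraid]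
  have hc' : (a*b)^3 = (a*b*a)*(a*b*a) := by
    calc (a*b)^3 = (a*b*a)*(b*a*b) := by simp [pow_succ, mul_assoc]
      _ = (a*b*a)*(a*b*a) := by rw [← hbraid]
  unfold Commute SemiconjBy
  rw [hc']
  calc (a*b*a)*(a*b*a)*a = (a*b*a)*((a*b*a)*a) := by simp [mul_assoc]
    _ = (a*b*a)*(b*(a*b*a)) := by rw [hDa]
    _ = ((a*b*a)*b)*(a*b*a) := by simp [mul_assoc]
    _ = a*((a*b*a)*(a*b*a)) := by rw [hDb]; simp [mul_assoc]

lemma braid_pow (hbraid : a * b * a = b * a * b) :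
    ∀ m : ℕ, ((a*b)^3)^(m+1) = a^(2*(m+1)) * (b * ((a^2*b^2)^m * (a^2*b))) := by
  intro m
  induction m with
  | zero => simpa [mul_assoc, pow_two] using braid_cube a b hbraid
  | succ m ih =>
      have hcomm := (braid_comm a b hbraid).pow_right (2*(m+1))
      have ha2 : a^(2*(m+1)) * a^2 = a^(2*(m+2)) := by rw [← pow_add, show 2*(m+1)+2 = 2*(m+2) from by ring]
      calc ((a*b)^3)^(m+2) = (a*b)^3 * ((a*b)^3)^(m+1) := by rw [← pow_succ']
        _ = (a*b)^3 * (a^(2*(m+1)) * (b * ((a^2*b^2)^m * (a^2*b)))) := by rw [ih]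
        _ = a^(2*(m+1)) * ((a*b)^3 * (b * ((a^2*b^2)^m * (a^2*b)))) := by
              rw [← mul_assoc, hcomm.eq, mul_assoc]
        _ = a^(2*(m+1)) * (a^2*b*(a^2*b) * (b * ((a^2*b^2)^m * (a^2*b)))) := by
              rw [braid_cube a b hbraid]
        _ = (a^(2*(m+1)) * a^2) * (b * ((a^2*b^2) * ((a^2*b^2)^m * (a^2*b)))) := by
              simp [pow_two, mul_assoc]
        _ = a^(2*(m+2)) * (b * ((a^2*b^2)^(m+1) * (a^2*b))) := by
              rw [ha2, ← mul_assoc (a^2*b^2), ← pow_succ']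

lemma braid_prod :
    ∀ m : ℕ, (((List.range m).map
        (fun i => a ^ (2 * (i + 1)) * b ^ 2 * (a ^ (2 * (i + 1)))⁻¹)).prod) * a^(2*m)
      = (a^2*b^2)^m := by
  intro m
  induction m with
  | zero => simp
  | succ m ih =>
      have e : a^(2*(m+1)) = a^(2*m)*a^2 := by rw [← pow_add, show 2*m+2 = 2*(m+1) from by ring]
      have h : a^(2*(m+1)) * b^2 * (a^(2*(m+1)))⁻¹ * a^(2*(m+1)) = a^(2*m) * (a^2*b^2) := by
        calc a^(2*(m+1)) * b^2 * (a^(2*(m+1)))⁻¹ * a^(2*(m+1)) = a^(2*(m+1)) * b^2 := by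
              simp [mul_assoc]
          _ = a^(2*m) * (a^2*b^2) := by rw [e, mul_assoc]
      rw [List.range_succ, List.map_append, List.prod_append]
      simp only [List.map_cons, List.map_nil, List.prod_cons, List.prod_nil, mul_one]
      rw [mul_assoc, h, ← mul_assoc, ih, ← pow_succ]
end

/-- If `a, b` satisfy the braid relation, then for every `n ≥ 1`, conjugating
`(a*b)^(6n)` by `a^(4n)` gives
`a^(8n) * b * (∏_{i=1}^{2n-1} a^(2i) * b^2 * a^(-2i)) * (a^(4n) * b * a^(-4n))`,
the product being taken in increasing order of `i`. -/
theorem braid_word_identity_final {G : Type*} [Group G] (a b : G)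
    (hbraid : a * b * a = b * a * b) :
    ∀ n : ℕ, 1 ≤ n →
      a ^ (4 * n) * (a * b) ^ (6 * n) * (a ^ (4 * n))⁻¹ =
        a ^ (8 * n) * b *
          (((List.range (2 * n - 1)).map
            (fun i => a ^ (2 * (i + 1)) * b ^ 2 * (a ^ (2 * (i + 1)))⁻¹)).prod) *
          (a ^ (4 * n) * b * (a ^ (4 * n))⁻¹) := by
  intro n hn
  obtain ⟨k, rfl⟩ : ∃ k, n = k + 1 := ⟨n - 1, (Nat.succ_pred_eq_of_pos hn).symm⟩
  have h1 : 2 * (k+1) - 1 = (2*k) + 1 := by omega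
  have h2 : (a*b)^(6*(k+1)) = a^(2*(2*k+2)) * (b * ((a^2*b^2)^(2*k+1) * (a^2*b))) := by
    rw [show (6*(k+1)) = 3*(2*k+2) by ring, pow_mul]
    exact braid_pow a b hbraid (2*k+1)
  have h3 : (((List.range (2*k+1)).map
      (fun i => a ^ (2 * (i + 1)) * b ^ 2 * (a ^ (2 * (i + 1)))⁻¹)).prod)
      = (a^2*b^2)^(2*k+1) * (a^(2*(2*k+1)))⁻¹ := by
    rw [eq_mul_inv_iff_mul_eq]
    exact braid_prod a b (2*k+1)
  rw [h1, h2, h3]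
  have e1 : a ^ (8*(k+1)) = a ^ (4*(k+1)) * a ^ (4*(k+1)) := by
    rw [← pow_add, show 4*(k+1)+4*(k+1) = 8*(k+1) from by ring]
  have e2 : a ^ (2*(2*k+2)) = a ^ (4*(k+1)) := by rw [show 2*(2*k+2) = 4*(k+1) from by ring]
  have e4 : a ^ (2*(2*k+1)) = a ^ (4*(k+1)) * (a^2)⁻¹ := by
    rw [eq_mul_inv_iff_mul_eq, ← pow_add, show 2*(2*k+1)+2 = 4*(k+1) from by ring]
  rw [e1, e2, e4]
  simp [mul_assoc, mul_inv_rev, pow_two]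
end

section
/- Let A = [[1,1],[0,1]] and B = [[1,0],[-1,1]] in SL(2,ℤ). Then for every integer n ≥ 1, A^(4n) * B * (A^2 * B^2)^(2n-1) * A^2 * B = 1. -/
/-!
The element `A²B` has trace `0`, so `(A²B)² = -1` is central. Hence `A²B² = (A²B)B` is
`-B⁻¹A⁻²B`, a conjugate of `A⁻²` up to sign, and in the word `A^(2m+2) B (A²B²)^m A² B` the
powers of `A` cancel, leaving `(-1)^(m+1)`; for `m = 2n - 1` this is `1`.
-/

/-- The matrix of the right-handed Dehn twist `t_a` in `SL(2, ℤ)`. -/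
def DehnA : Matrix.SpecialLinearGroup (Fin 2) ℤ :=
  ⟨!![1, 1; 0, 1], by norm_num [Matrix.det_fin_two_of]⟩

/-- The matrix of the right-handed Dehn twist `t_b` in `SL(2, ℤ)`. -/
def DehnB : Matrix.SpecialLinearGroup (Fin 2) ℤ :=
  ⟨!![1, 0; -1, 1], by norm_num [Matrix.det_fin_two_of]⟩

section Group

variable {G : Type*} [Group G]

def monodromyWord (a b : G) (m : ℕ) : G :=
  a ^ (2 * (m + 1)) * b * (a ^ 2 * b ^ 2) ^ m * a ^ 2 * b

theorem monodromyWord_eq_pow {a b z : G} (hz : ∀ g, Commute z g) (h : (a ^ 2 * b) ^ 2 = z)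
    (m : ℕ) : monodromyWord a b m = z ^ (m + 1) := by
  have hbab : b * a ^ 2 * b = (a ^ 2)⁻¹ * z := by
    rw [← h, sq (a ^ 2 * b)]; group
  have hsemiconj : SemiconjBy b (a ^ 2 * b ^ 2) (b * a ^ 2 * b) := by
    simp only [SemiconjBy, sq, mul_assoc]
  have hconj : b * (a ^ 2 * b ^ 2) ^ m = (b * a ^ 2 * b) ^ m * b := (hsemiconj.pow_right m).eq
  calc monodromyWord a b m = a ^ (2 * (m + 1)) * (b * (a ^ 2 * b ^ 2) ^ m) * a ^ 2 * b := by
        simp only [monodromyWord, mul_assoc]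
    _ = a ^ (2 * (m + 1)) * (b * a ^ 2 * b) ^ (m + 1) := by
        rw [hconj, pow_succ (b * a ^ 2 * b)]; simp only [mul_assoc]
    _ = z ^ (m + 1) := by
        rw [hbab, (hz _).symm.mul_pow, inv_pow, ← pow_mul, mul_inv_cancel_left]

end Group

theorem sq_DehnA_sq_mul_DehnB : (DehnA ^ 2 * DehnB) ^ 2 = -1 := by
  ext i j; fin_cases i <;> fin_cases j <;> rfl

/-- For every `n ≥ 1`, `A^(4n) * B * (A^2 * B^2)^(2n-1) * A^2 * B = 1` in `SL(2, ℤ)`. -/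
theorem monodromy_word_eq_one :
    ∀ n : ℕ, 1 ≤ n →
      DehnA ^ (4 * n) * DehnB * (DehnA ^ 2 * DehnB ^ 2) ^ (2 * n - 1) *
        DehnA ^ 2 * DehnB = 1 := by
  intro n hn
  have hodd : 2 * n - 1 + 1 = 2 * n := by omega
  rw [show 4 * n = 2 * (2 * n - 1 + 1) by omega]
  calc monodromyWord DehnA DehnB (2 * n - 1) = (-1) ^ (2 * n) := by
        rw [monodromyWord_eq_pow (fun g => (Commute.one_left g).neg_left)
          sq_DehnA_sq_mul_DehnB, hodd]
    _ = 1 := (even_two_mul n).neg_one_pow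
end

section
/- Let A = [[1,1],[0,1]] and B = [[1,0],[-1,1]] in SL(2,ℤ). Then for every integer n ≥ 1, A^(8n) * B * (∏_{i=1}^{2n-1} A^(2i) * B^2 * A^(-2i)) * (A^(4n) * B * A^(-4n)) = 1, where the product is taken in increasing order of i. -/
theorem List.prod_map_range_conj_pow {G : Type*} [Group G] (g h : G) (k : ℕ) :
    ((List.range k).map (fun i => g ^ (i + 1) * h * (g ^ (i + 1))⁻¹)).prod
      = (g * h) ^ k * (g ^ k)⁻¹ := by
  induction k with
  | zero => simp
  | succ k ih =>
    rw [List.range_succ, List.map_append, List.prod_append, ih]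
    simp only [List.map_cons, List.map_nil, List.prod_cons, List.prod_nil, mul_one]
    rw [pow_succ (g * h), pow_succ g]
    group

theorem one_add_pow_of_mul_self_eq_zero {R : Type*} [Semiring R] {N : R} (hN : N * N = 0)
    (k : ℕ) : (1 + N) ^ k = 1 + k • N := by
  induction k with
  | zero => simp
  | succ k ih =>
    rw [pow_succ, ih, succ_nsmul]
    simp only [add_mul, mul_add, one_mul, mul_one, smul_mul_assoc, hN, smul_zero]
    abel

open Matrix ModularGroup MatrixGroups

theorem dehnA_eq_T : DehnA = T := rfl

theorem coe_dehnA_pow (m : ℕ) :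
    ((DehnA ^ m : SL(2, ℤ)) : Matrix (Fin 2) (Fin 2) ℤ) = !![1, (m : ℤ); 0, 1] := by
  rw [dehnA_eq_T, ← zpow_natCast, coe_T_zpow]

theorem coe_dehnA_pow_inv (m : ℕ) :
    (((DehnA ^ m)⁻¹ : SL(2, ℤ)) : Matrix (Fin 2) (Fin 2) ℤ) = !![1, -(m : ℤ); 0, 1] := by
  rw [dehnA_eq_T, ← zpow_natCast, ← _root_.zpow_neg, coe_T_zpow]

theorem coe_dehnA_sq_mul_dehnB_sq :
    ((DehnA ^ 2 * DehnB ^ 2 : SL(2, ℤ)) : Matrix (Fin 2) (Fin 2) ℤ)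
      = -(1 + !![2, -2; 2, -2]) := by
  decide

theorem coe_dehnA_sq_mul_dehnB_sq_pow (k : ℕ) :
    (((DehnA ^ 2 * DehnB ^ 2) ^ k : SL(2, ℤ)) : Matrix (Fin 2) (Fin 2) ℤ)
      = (-1 : ℤ) ^ k • !![1 + 2 * (k : ℤ), -2 * k; 2 * k, 1 - 2 * k] := by
  have hN : !![(2 : ℤ), -2; 2, -2] * !![2, -2; 2, -2] = 0 := by decide
  rw [Matrix.SpecialLinearGroup.coe_pow, coe_dehnA_sq_mul_dehnB_sq, ← neg_one_smul ℤ, smul_pow,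
    one_add_pow_of_mul_self_eq_zero hN]
  congr 1
  ext i j
  fin_cases i <;> fin_cases j <;> simp <;> ring

theorem dehnB_mul_dehnA_sq_mul_dehnB_sq_pow_mul_dehnA_sq_mul_dehnB (k : ℕ) :
    DehnB * (DehnA ^ 2 * DehnB ^ 2) ^ k * DehnA ^ 2 * DehnB
      = (-1) ^ (k + 1) * (DehnA ^ (2 * k + 2))⁻¹ := by
  apply Subtype.ext
  simp only [Matrix.SpecialLinearGroup.coe_mul]
  rw [coe_dehnA_sq_mul_dehnB_sq_pow, coe_dehnA_pow, coe_dehnA_pow_inv,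
    Matrix.SpecialLinearGroup.coe_pow (A := -1), Matrix.SpecialLinearGroup.coe_neg,
    Matrix.SpecialLinearGroup.coe_one,
    ← neg_one_smul ℤ (1 : Matrix (Fin 2) (Fin 2) ℤ), smul_pow, one_pow]
  simp only [Matrix.mul_smul, Matrix.smul_mul, pow_succ, mul_neg_one, neg_smul, ← smul_neg]
  congr 1
  simp [DehnB]
  constructor <;> ring

/-- For every `n ≥ 1`, the monodromy factorization
`A^(8n) * B * (∏_{i=1}^{2n-1} A^(2i) * B^2 * A^(-2i)) * (A^(4n) * B * A^(-4n)) = 1`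
holds in `SL(2, ℤ)`, the product being taken in increasing order of `i`. -/
theorem monodromy_factorization_eq_one :
    ∀ n : ℕ, 1 ≤ n →
      DehnA ^ (8 * n) * DehnB *
        (((List.range (2 * n - 1)).map
          (fun i => DehnA ^ (2 * (i + 1)) * DehnB ^ 2 * (DehnA ^ (2 * (i + 1)))⁻¹)).prod) *
        (DehnA ^ (4 * n) * DehnB * (DehnA ^ (4 * n))⁻¹) = 1 := by
  intro n hn
  obtain ⟨m, rfl⟩ := Nat.exists_eq_add_of_le' hn
  rw [show 2 * (m + 1) - 1 = 2 * m + 1 by omega]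
  simp only [pow_mul DehnA 2, List.prod_map_range_conj_pow]
  set x := DehnA ^ (4 * (m + 1)) with hx_def
  have h8 : DehnA ^ (8 * (m + 1)) = x * x := by rw [hx_def, ← pow_add]; ring_nf
  have hx : x = (DehnA ^ 2) ^ (2 * m + 1) * DehnA ^ 2 := by
    rw [hx_def, ← pow_mul, ← pow_add]; ring_nf
  have key : DehnB * (DehnA ^ 2 * DehnB ^ 2) ^ (2 * m + 1) * DehnA ^ 2 * DehnB = x⁻¹ := by
    rw [dehnB_mul_dehnA_sq_mul_dehnB_sq_pow_mul_dehnA_sq_mul_dehnB,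
      Even.neg_one_pow ⟨m + 1, by omega⟩, one_mul, hx_def]
    ring_nf
  calc _ = x * x * (DehnB * (DehnA ^ 2 * DehnB ^ 2) ^ (2 * m + 1) * DehnA ^ 2 * DehnB) * x⁻¹ :=
        by rw [h8, hx]; group
    _ = 1 := by rw [key]; group
end

section
/- The group presented by two generators a, b subject to the two relators (a*b*a)*(b*a*b)⁻¹ and (a*b)^6 is isomorphic to SL(2,ℤ). Equivalently, the mapping class group of the torus, given by the presentation ⟨a, b | a*b*a = b*a*b, (a*b)^6 = 1⟩, is isomorphic to the special linear group of 2×2 integer matrices of determinant 1. -/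
/-!
Send `t_a ↦ T = !![1, 1; 0, 1]` and `t_b ↦ !![1, 0; -1, 1]`. This is onto because `S` and `T`
generate `SL(2, ℤ)`, and `S` is the image of `(t_a t_b t_a)⁻¹`.

For injectivity, the braid relation makes `z = (t_a t_b)³ = (t_a t_b t_a)²` central, of order two
by the second relation, and its image is `-1`. Modulo `z` the group is generated by
`s = t_a t_b t_a` and `u = t_a t_b` with `s² = u³ = 1`, and under the Möbius action on `ℍ` the
element `s` maps `{re > 0}` into `{re < 0}` while `u` and `u⁻¹` map `{re < 0}` into `{re > 0}`.
The ping-pong lemma for `ℤ/2 ∗ ℤ/3` then shows that the quotient by `⟨z⟩` acts faithfully, so the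
kernel lies in `⟨z⟩ = {1, z}` and is trivial.
-/

/-- The relators of the presentation `⟨a, b | a*b*a = b*a*b, (a*b)^6 = 1⟩` of the
mapping class group of the torus, inside the free group on two generators. -/
def torusMCGRelators : Set (FreeGroup (Fin 2)) :=
  {(FreeGroup.of 0 * FreeGroup.of 1 * FreeGroup.of 0) *
      (FreeGroup.of 1 * FreeGroup.of 0 * FreeGroup.of 1)⁻¹,
   (FreeGroup.of 0 * FreeGroup.of 1) ^ 6}

section Braid

variable {M : Type*} [Monoid M] {x y : M}

theorem pow_three_eq_sq_of_braid (h : x * y * x = y * x * y) :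
    (x * y) ^ 3 = (x * y * x) ^ 2 := by
  calc (x * y) ^ 3 = (x * y * x) * (y * x * y) := by
        simp only [pow_succ, pow_zero, one_mul, mul_assoc]
    _ = (x * y * x) ^ 2 := by rw [← h, sq]

theorem commute_pow_three_of_braid (h : x * y * x = y * x * y) :
    Commute x ((x * y) ^ 3) ∧ Commute y ((x * y) ^ 3) := by
  have hx : SemiconjBy (x * y * x) x y := by
    unfold SemiconjBy
    conv_lhs => rw [h]
    simp only [mul_assoc]
  have hy : SemiconjBy (x * y * x) y x := by
    unfold SemiconjBy
    conv_rhs => rw [h]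
    simp only [mul_assoc]
  rw [pow_three_eq_sq_of_braid h, sq]
  exact ⟨(hy.mul_left hx).symm, (hx.mul_left hy).symm⟩

end Braid

theorem Subgroup.normal_of_le_center {G : Type*} [Group G] {N : Subgroup G}
    (h : N ≤ Subgroup.center G) : N.Normal :=
  ⟨fun n hn g => by rwa [Subgroup.mem_center_iff.mp (h hn) g, mul_inv_cancel_right]⟩

theorem MonoidHom.injective_of_ker_le_zpowers {G H : Type*} [Group G] [Group H] (f : G →* H)
    {z : G} (hker : f.ker ≤ Subgroup.zpowers z) (hz : z ^ 2 = 1) (hfz : f z ≠ 1) :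
    Function.Injective f := by
  rw [injective_iff_map_eq_one]
  intro x hx
  obtain ⟨k, rfl⟩ := Subgroup.mem_zpowers_iff.mp (hker hx)
  have hz' : z ^ (2 : ℤ) = 1 := mod_cast hz
  obtain ⟨m, rfl | rfl⟩ := k.even_or_odd'
  · rw [zpow_mul, hz', one_zpow]
  · rw [zpow_add_one, zpow_mul, hz', one_zpow, one_mul] at hx
    exact absurd hx hfz

def zmodPowHom {G : Type*} [Group G] {n : ℕ} (g : G) (hg : g ^ n = 1) :
    Multiplicative (ZMod n) →* G :=
  AddMonoidHom.toMultiplicativeLeft <| ZMod.lift n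
    ⟨zmultiplesHom _ (Additive.ofMul g), by simpa [zmultiplesHom] using congrArg Additive.ofMul hg⟩

theorem zmodPowHom_ofAdd_one {G : Type*} [Group G] {n : ℕ} (g : G) (hg : g ^ n = 1) :
    zmodPowHom g hg (Multiplicative.ofAdd 1) = g := by
  simp only [zmodPowHom, AddMonoidHom.toMultiplicativeLeft_apply_apply, toAdd_ofAdd]
  rw [← Int.cast_one (R := ZMod n), ZMod.lift_coe]
  simp [zmultiplesHom]

/-- `Q` is a quotient of `ℤ/2 ∗ ℤ/3`, and the composite `ℤ/2 ∗ ℤ/3 → Perm α` is injective by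
`Monoid.CoprodI.lift_injective_of_ping_pong`. -/
theorem injective_of_ping_pong_two_three {Q α : Type*} [Group Q] (ρ : Q →* Equiv.Perm α)
    {s u : Q} (hs : s ^ 2 = 1) (hu : u ^ 3 = 1) (hgen : Subgroup.closure {s, u} = ⊤)
    {X Y : Set α} (hX : X.Nonempty) (hXY : Disjoint X Y)
    (hsY : Set.MapsTo (ρ s) Y X) (huX : Set.MapsTo (ρ u) X Y) (hu'X : Set.MapsTo (ρ u⁻¹) X Y) :
    Function.Injective ρ := by
  have hord : ∀ b : Bool, (cond b u s) ^ (cond b 3 2 : ℕ) = 1 := Bool.forall_bool.2 ⟨hs, hu⟩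
  let ψ : ∀ b : Bool, Multiplicative (ZMod (cond b 3 2)) →* Q := fun b => zmodPowHom _ (hord b)
  have hψ : ∀ b, ψ b (Multiplicative.ofAdd 1) = cond b u s := fun b => zmodPowHom_ofAdd_one _ _
  have hsurj : Function.Surjective (Monoid.CoprodI.lift ψ) := by
    rw [← MonoidHom.range_eq_top, eq_top_iff, ← hgen, Subgroup.closure_le]
    rintro _ (rfl | rfl)
    · exact ⟨Monoid.CoprodI.of (i := false) (Multiplicative.ofAdd 1), by simp [hψ]⟩
    · exact ⟨Monoid.CoprodI.of (i := true) (Multiplicative.ofAdd 1), by simp [hψ]⟩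
  have hcomp : ρ.comp (Monoid.CoprodI.lift ψ) = Monoid.CoprodI.lift fun b => ρ.comp (ψ b) :=
    Monoid.CoprodI.ext_hom _ _ fun b => by ext; simp
  refine Function.Injective.of_comp_right (g := Monoid.CoprodI.lift ψ) ?_ hsurj
  change Function.Injective (ρ.comp (Monoid.CoprodI.lift ψ))
  rw [hcomp]
  obtain ⟨x, hx⟩ := hX
  refine Monoid.CoprodI.lift_injective_of_ping_pong _
    (Or.inr ⟨true, by simp [Cardinal.mk_fintype]⟩) (fun b => cond b Y X)
    (Bool.forall_bool.2 ⟨⟨x, hx⟩, ⟨_, huX hx⟩⟩) (fun i j hij => ?_) (fun i j hij => ?_)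
  · cases i <;> cases j <;> simp_all [Function.onFun, Disjoint.symm]
  · have h2 : ∀ h : Multiplicative (ZMod 2), h ≠ 1 → h = .ofAdd 1 := by decide
    have h3 : ∀ h : Multiplicative (ZMod 3), h ≠ 1 → h = .ofAdd 1 ∨ h = (.ofAdd 1)⁻¹ := by
      decide
    intro h hh
    simp only [Set.smul_set_subset_iff, Equiv.Perm.smul_def, MonoidHom.comp_apply]
    cases i <;> cases j <;> simp only [ne_eq, not_true_eq_false] at hij
    · obtain rfl := h2 h hh
      simpa [hψ, Set.MapsTo] using hsY
    · obtain rfl | rfl := h3 h hh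
      · simpa [hψ, Set.MapsTo] using huX
      · simpa [hψ, Set.MapsTo] using hu'X

open ModularGroup UpperHalfPlane
open scoped MatrixGroups

theorem UpperHalfPlane.re_S_smul (τ : ℍ) : (S • τ).re = -τ.re / Complex.normSq τ := by
  rw [modular_S_smul]
  simp [Complex.inv_re, neg_div]

theorem UpperHalfPlane.re_S_smul_neg {τ : ℍ} (h : 0 < τ.re) : (S • τ).re < 0 := by
  rw [re_S_smul]
  exact div_neg_of_neg_of_pos (neg_neg_of_pos h) (Complex.normSq_pos.mpr τ.ne_zero)

theorem UpperHalfPlane.re_S_smul_pos {τ : ℍ} (h : τ.re < 0) : 0 < (S • τ).re := by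
  rw [re_S_smul]
  exact div_pos (neg_pos.mpr h) (Complex.normSq_pos.mpr τ.ne_zero)

abbrev TorusMCG : Type := PresentedGroup torusMCGRelators

namespace TorusMCG

def ta : TorusMCG := PresentedGroup.of 0

def tb : TorusMCG := PresentedGroup.of 1

theorem ta_mul_tb_mul_ta : ta * tb * ta = tb * ta * tb :=
  mul_inv_eq_one.mp <| PresentedGroup.one_of_mem (rels := torusMCGRelators) (Set.mem_insert _ _)

theorem ta_mul_tb_pow_six : (ta * tb) ^ 6 = 1 :=
  PresentedGroup.one_of_mem (rels := torusMCGRelators) (Set.mem_insert_of_mem _ rfl)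

theorem closure_ta_tb : Subgroup.closure {ta, tb} = ⊤ := by
  rw [← PresentedGroup.closure_range_of]
  congr 1
  ext g
  simp [Fin.exists_fin_two, ta, tb, eq_comm]

theorem closure_ta_mul_tb_mul_ta_ta_mul_tb : Subgroup.closure {ta * tb * ta, ta * tb} = ⊤ := by
  have hs : ta * tb * ta ∈ Subgroup.closure {ta * tb * ta, ta * tb} :=
    Subgroup.subset_closure (by simp)
  have hu : ta * tb ∈ Subgroup.closure {ta * tb * ta, ta * tb} :=
    Subgroup.subset_closure (by simp)
  have ha : ta ∈ Subgroup.closure {ta * tb * ta, ta * tb} := by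
    simpa [mul_assoc] using mul_mem (inv_mem hu) hs
  rw [eq_top_iff, ← closure_ta_tb, Subgroup.closure_le]
  rintro _ (rfl | rfl)
  · exact ha
  · simpa using mul_mem (inv_mem ha) hu

def hyperelliptic : TorusMCG := (ta * tb) ^ 3

theorem hyperelliptic_eq_sq : hyperelliptic = (ta * tb * ta) ^ 2 :=
  pow_three_eq_sq_of_braid ta_mul_tb_mul_ta

theorem hyperelliptic_sq : hyperelliptic ^ 2 = 1 := by
  rw [hyperelliptic, ← pow_mul, ta_mul_tb_pow_six]

theorem hyperelliptic_mem_center : hyperelliptic ∈ Subgroup.center TorusMCG := by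
  rw [← Subgroup.centralizer_univ, ← Subgroup.coe_top, ← closure_ta_tb,
    Subgroup.centralizer_closure, Subgroup.mem_centralizer_iff]
  obtain ⟨ha, hb⟩ := commute_pow_three_of_braid ta_mul_tb_mul_ta
  simpa using ⟨ha.eq, hb.eq⟩

instance : (Subgroup.zpowers hyperelliptic).Normal :=
  Subgroup.normal_of_le_center (Subgroup.zpowers_le.mpr hyperelliptic_mem_center)

def twistB : SL(2, ℤ) := ⟨!![1, 0; -1, 1], by simp [Matrix.det_fin_two]⟩

def toSL2Z : TorusMCG →* SL(2, ℤ) :=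
  PresentedGroup.toGroup (f := ![T, twistB]) <| by
    rintro r (rfl | rfl) <;>
      simp only [map_mul, map_inv, map_pow, FreeGroup.lift_apply_of, Matrix.cons_val_zero,
        Matrix.cons_val_one] <;>
      decide

@[simp]
theorem toSL2Z_ta : toSL2Z ta = T := PresentedGroup.toGroup.of _

@[simp]
theorem toSL2Z_tb : toSL2Z tb = twistB := PresentedGroup.toGroup.of _

theorem toSL2Z_ta_mul_tb_mul_ta : toSL2Z (ta * tb * ta) = -S := by
  rw [map_mul, map_mul, toSL2Z_ta, toSL2Z_tb]
  decide

theorem toSL2Z_ta_mul_tb : toSL2Z (ta * tb) = -(S * T⁻¹) := by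
  rw [map_mul, toSL2Z_ta, toSL2Z_tb]
  decide

theorem toSL2Z_inv_ta_mul_tb : toSL2Z (ta * tb)⁻¹ = T * S := by
  rw [map_inv, map_mul, toSL2Z_ta, toSL2Z_tb]
  decide

theorem toSL2Z_hyperelliptic : toSL2Z hyperelliptic = -1 := by
  rw [hyperelliptic, map_pow, map_mul, toSL2Z_ta, toSL2Z_tb]
  decide

theorem surjective_toSL2Z : Function.Surjective toSL2Z := by
  have hS : toSL2Z (ta * tb * ta)⁻¹ = S := by
    rw [map_inv, toSL2Z_ta_mul_tb_mul_ta]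
    decide
  rw [← MonoidHom.range_eq_top, eq_top_iff, ← SpecialLinearGroup.SL2Z_generators,
    Subgroup.closure_le]
  rintro _ (rfl | rfl)
  exacts [⟨_, hS⟩, ⟨_, toSL2Z_ta⟩]

noncomputable def moebius : TorusMCG →* Equiv.Perm ℍ :=
  (MulAction.toPermHom SL(2, ℤ) ℍ).comp toSL2Z

theorem moebius_apply (g : TorusMCG) (τ : ℍ) : moebius g τ = toSL2Z g • τ := rfl

theorem moebius_hyperelliptic : moebius hyperelliptic = 1 := by
  ext τ
  simp [moebius_apply, toSL2Z_hyperelliptic]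

theorem mapsTo_moebius_ta_mul_tb_mul_ta :
    Set.MapsTo (moebius (ta * tb * ta)) {τ | 0 < τ.re} {τ | τ.re < 0} := fun τ hτ => by
  show (toSL2Z (ta * tb * ta) • τ).re < 0
  rw [toSL2Z_ta_mul_tb_mul_ta, SL_neg_smul]
  exact re_S_smul_neg hτ

theorem mapsTo_moebius_ta_mul_tb :
    Set.MapsTo (moebius (ta * tb)) {τ | τ.re < 0} {τ | 0 < τ.re} := fun τ (hτ : τ.re < 0) => by
  have h : (T⁻¹ • τ).re < 0 := by
    rw [← zpow_neg_one, re_T_zpow_smul]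
    push_cast
    linarith
  show 0 < (toSL2Z (ta * tb) • τ).re
  rw [toSL2Z_ta_mul_tb, SL_neg_smul, mul_smul]
  exact re_S_smul_pos h

theorem mapsTo_moebius_inv_ta_mul_tb :
    Set.MapsTo (moebius (ta * tb)⁻¹) {τ | τ.re < 0} {τ | 0 < τ.re} := fun τ hτ => by
  show 0 < (toSL2Z (ta * tb)⁻¹ • τ).re
  rw [toSL2Z_inv_ta_mul_tb, mul_smul, re_T_smul]
  linarith [re_S_smul_pos hτ]

theorem injective_moebius_quotient :
    Function.Injective (QuotientGroup.lift (Subgroup.zpowers hyperelliptic) moebius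
      (Subgroup.zpowers_le.mpr moebius_hyperelliptic)) := by
  have hz : ((hyperelliptic : TorusMCG) : TorusMCG ⧸ Subgroup.zpowers hyperelliptic) = 1 :=
    (QuotientGroup.eq_one_iff _).mpr (Subgroup.mem_zpowers _)
  have hgen : Subgroup.closure
      {((ta * tb * ta : TorusMCG) : TorusMCG ⧸ Subgroup.zpowers hyperelliptic), ↑(ta * tb)} = ⊤ := by
    rw [← QuotientGroup.coe_mk', ← Set.image_pair, ← MonoidHom.map_closure,
      closure_ta_mul_tb_mul_ta_ta_mul_tb,
      Subgroup.map_top_of_surjective _ (QuotientGroup.mk'_surjective _)]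
  exact injective_of_ping_pong_two_three _ (X := {τ | τ.re < 0}) (Y := {τ | 0 < τ.re})
    (by rw [← QuotientGroup.mk_pow, ← hyperelliptic_eq_sq, hz])
    (by rw [← QuotientGroup.mk_pow, ← hyperelliptic, hz]) hgen ⟨(-1 : ℝ) +ᵥ I, by simp⟩
    (Set.disjoint_left.mpr fun _ h₁ h₂ => lt_asymm (α := ℝ) h₁ h₂)
    mapsTo_moebius_ta_mul_tb_mul_ta mapsTo_moebius_ta_mul_tb mapsTo_moebius_inv_ta_mul_tb

theorem ker_toSL2Z_le : toSL2Z.ker ≤ Subgroup.zpowers hyperelliptic := by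
  rw [(QuotientGroup.injective_lift_iff _ _ _).mp injective_moebius_quotient, moebius,
    ← MonoidHom.comap_ker]
  exact toSL2Z.ker_le_comap _

theorem injective_toSL2Z : Function.Injective toSL2Z :=
  toSL2Z.injective_of_ker_le_zpowers ker_toSL2Z_le hyperelliptic_sq
    (by rw [toSL2Z_hyperelliptic]; decide)

end TorusMCG

/-- The group presented by two generators `a, b` subject to the relators
`(a*b*a)*(b*a*b)⁻¹` and `(a*b)^6` -- the mapping class group of the torus -- is
isomorphic to `SL(2, ℤ)`. -/
theorem torusMCG_iso_SL2Z :
    Nonempty (PresentedGroup torusMCGRelators ≃* Matrix.SpecialLinearGroup (Fin 2) ℤ) :=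
  ⟨MulEquiv.ofBijective _ ⟨TorusMCG.injective_toSL2Z, TorusMCG.surjective_toSL2Z⟩⟩
end

section
/- Let t denote the generator of the ring ℤ[t, t⁻¹] of Laurent polynomials over ℤ. Fix integers n ≥ 2, r ≥ 1, s ≥ 0, and set P = (t - t⁻¹)^(n-2) * ((2r-1) + r*t² - r*t⁻²)^s. Then: (i) the coefficient of t^(n-2+2s) in P equals r^s; (ii) the coefficient of t^d in P is 0 for every d > n-2+2s; (iii) the coefficient of t^(-(n-2+2s)) in P equals (-1)^(n+s) * r^s; and (iv) the coefficient of t^d in P is 0 for every d < -(n-2+2s). -/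
/-!
Clearing denominators, `P = t^(-m) Q(t)` with `m = n - 2 + 2s` and
`Q = (t² - 1)^(n-2) (r t⁴ + (2r - 1) t² - r)^s` an honest polynomial of degree at most `2m`.
So the coefficients of `P` vanish outside `[-m, m]`, its coefficient at `t^m` is the coefficient
`1^(n-2) r^s` of `Q` at `t^(2m)`, and its coefficient at `t^(-m)` is the constant term
`(-1)^(n-2) (-r)^s` of `Q`.
-/

open LaurentPolynomial Polynomial

section
variable {R : Type*} [Semiring R]

theorem LaurentPolynomial.coeff_mul_T (f : R[T;T⁻¹]) (m d : ℤ) :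
    (f * T m).coeff d = f.coeff (d - m) := by
  simpa [sub_eq_add_neg] using AddMonoidAlgebra.coeff_mul_single_apply f (1 : R) m d

theorem Polynomial.coeff_toLaurent_natCast (f : R[X]) (k : ℕ) :
    f.toLaurent.coeff k = f.coeff k :=
  Finsupp.mapDomain_apply Nat.castEmbedding.injective _ k

theorem Polynomial.coeff_toLaurent_of_neg (f : R[X]) {d : ℤ} (hd : d < 0) :
    f.toLaurent.coeff d = 0 :=
  Finsupp.mapDomain_of_notMem_range _ _ fun ⟨k, hk⟩ ↦ by simp at hk; omega

theorem Polynomial.coeff_toLaurent_of_natDegree_lt (f : R[X]) {d : ℤ}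
    (hd : (f.natDegree : ℤ) < d) : f.toLaurent.coeff d = 0 := by
  lift d to ℕ using by omega
  rw [coeff_toLaurent_natCast]
  exact coeff_eq_zero_of_natDegree_lt (by omega)

theorem Polynomial.coeff_toLaurent_mul_T_neg_of_natDegree_le (f : R[X]) (k : ℕ)
    (hf : f.natDegree ≤ 2 * k) :
    (f.toLaurent * T (-k)).coeff k = f.coeff (2 * k) ∧
    (∀ d : ℤ, k < d → (f.toLaurent * T (-k)).coeff d = 0) ∧
    (f.toLaurent * T (-k)).coeff (-k) = f.coeff 0 ∧
    (∀ d : ℤ, d < -k → (f.toLaurent * T (-k)).coeff d = 0) := by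
  simp only [coeff_mul_T, sub_neg_eq_add]
  refine ⟨?_, fun d hd ↦ ?_, ?_, fun d hd ↦ ?_⟩
  · rw [show (k : ℤ) + k = (2 * k : ℕ) by push_cast; ring, coeff_toLaurent_natCast]
  · exact f.coeff_toLaurent_of_natDegree_lt (by omega)
  · simpa using f.coeff_toLaurent_natCast 0
  · exact f.coeff_toLaurent_of_neg (by omega)

theorem Polynomial.natDegree_pow_mul_pow_le {f g : R[X]} {a b : ℕ} (hf : f.natDegree ≤ a)
    (hg : g.natDegree ≤ b) (i j : ℕ) : (f ^ i * g ^ j).natDegree ≤ i * a + j * b :=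
  natDegree_mul_le_of_le (natDegree_pow_le_of_le i hf) (natDegree_pow_le_of_le j hg)

theorem Polynomial.coeff_pow_mul_pow_of_natDegree_le {f g : R[X]} {a b : ℕ}
    (hf : f.natDegree ≤ a) (hg : g.natDegree ≤ b) (i j : ℕ) :
    (f ^ i * g ^ j).coeff (i * a + j * b) = f.coeff a ^ i * g.coeff b ^ j := by
  rw [coeff_mul_add_eq_of_natDegree_le (natDegree_pow_le_of_le i hf)
    (natDegree_pow_le_of_le j hg), coeff_pow_of_natDegree_le hf, coeff_pow_of_natDegree_le hg]

end

section
variable {R : Type*} [CommRing R]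

theorem LaurentPolynomial.T_one_sub_T_neg_one :
    (T 1 - T (-1) : R[T;T⁻¹]) = toLaurent (X ^ 2 - 1) * T (-1) := by
  rw [map_sub, toLaurent_X_pow, map_one, sub_mul, one_mul, ← T_add]
  norm_num

theorem LaurentPolynomial.C_add_smul_T_two_sub_smul_T_neg_two (a r : R) :
    LaurentPolynomial.C a + r • T 2 - r • T (-2) =
      toLaurent (Polynomial.C r * X ^ 4 + Polynomial.C a * X ^ 2 - Polynomial.C r) * T (-2) := by
  simp only [map_sub, map_add, toLaurent_C_mul_X_pow, toLaurent_C, sub_mul, add_mul, mul_T_assoc]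
  norm_num [smul_eq_C_mul]
  exact add_comm _ _

end

theorem SW_Ynrs_top_coefficients_general (n : ℕ) (hn : 2 ≤ n) (r : ℤ) (s : ℕ)
    (P : LaurentPolynomial ℤ)
    (hP : P = (T 1 - T (-1)) ^ (n - 2) *
      (((2 * r - 1 : ℤ) : LaurentPolynomial ℤ) +
        (r : ℤ) • T 2 - (r : ℤ) • T (-2)) ^ s) :
    P.coeff ((n : ℤ) - 2 + 2 * s) = r ^ s ∧
    (∀ d : ℤ, (n : ℤ) - 2 + 2 * s < d → P.coeff d = 0) ∧
    P.coeff (-((n : ℤ) - 2 + 2 * s)) = (-1) ^ (n + s) * r ^ s ∧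
    (∀ d : ℤ, d < -((n : ℤ) - 2 + 2 * s) → P.coeff d = 0) := by
  obtain ⟨k, rfl⟩ := Nat.exists_eq_add_of_le' hn
  set p : ℤ[X] := X ^ 2 - 1
  set q : ℤ[X] := Polynomial.C r * X ^ 4 + Polynomial.C (2 * r - 1) * X ^ 2 - Polynomial.C r
  have hp : p.natDegree ≤ 2 := by simp only [p]; compute_degree!
  have hq : q.natDegree ≤ 4 := by simp only [q]; compute_degree!
  have hPQ : P = toLaurent (p ^ k * q ^ s) * T (-(k + 2 * s : ℕ)) := by
    rw [hP, ← eq_intCast LaurentPolynomial.C, T_one_sub_T_neg_one,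
      C_add_smul_T_two_sub_smul_T_neg_two, Nat.add_sub_cancel, mul_pow, mul_pow, T_pow, T_pow,
      map_mul, map_pow, map_pow,
      show -((k + 2 * s : ℕ) : ℤ) = k * -1 + s * -2 by push_cast; ring, T_add]
    ring
  have hm : ((k + 2 : ℕ) : ℤ) - 2 + 2 * s = (k + 2 * s : ℕ) := by push_cast; ring
  have htop : (p ^ k * q ^ s).coeff (2 * (k + 2 * s)) = r ^ s := by
    rw [show 2 * (k + 2 * s) = k * 2 + s * 4 by ring, coeff_pow_mul_pow_of_natDegree_le hp hq]
    simp only [p, q, coeff_sub, coeff_add, coeff_C_mul, coeff_X_pow, coeff_C, coeff_one]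
    norm_num
  have hbot : (p ^ k * q ^ s).coeff 0 = (-1) ^ (k + 2 + s) * r ^ s := by
    simp only [p, q, coeff_zero_eq_eval_zero, eval_mul, eval_pow, eval_sub, eval_add, eval_C,
      eval_X, eval_one]
    norm_num
    rw [neg_pow]
    ring
  rw [hm, hPQ]
  simpa only [htop, hbot] using coeff_toLaurent_mul_T_neg_of_natDegree_le (p ^ k * q ^ s)
    (k + 2 * s) ((natDegree_pow_mul_pow_le hp hq k s).trans (by omega))

/-- Fix `n ≥ 2`, `r ≥ 1`, `s ≥ 0` and let
`P = (t - t⁻¹)^(n-2) * ((2r-1) + r t² - r t⁻²)^s ∈ ℤ[t, t⁻¹]`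
(the Seiberg–Witten polynomial of the knot-surgered manifold `Y(n)_{r,s}`). Then the
coefficient of `t^(n-2+2s)` is `r^s`, all coefficients above it vanish, the coefficient of
`t^(-(n-2+2s))` is `(-1)^(n+s) * r^s`, and all coefficients below it vanish. -/
theorem SW_Ynrs_top_coefficients (n : ℕ) (hn : 2 ≤ n) (r : ℤ) (hr : 1 ≤ r) (s : ℕ)
    (P : LaurentPolynomial ℤ)
    (hP : P = (T 1 - T (-1)) ^ (n - 2) *
      (((2 * r - 1 : ℤ) : LaurentPolynomial ℤ) +
        (r : ℤ) • T 2 - (r : ℤ) • T (-2)) ^ s) :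
    P.coeff ((n : ℤ) - 2 + 2 * s) = r ^ s ∧
    (∀ d : ℤ, (n : ℤ) - 2 + 2 * s < d → P.coeff d = 0) ∧
    P.coeff (-((n : ℤ) - 2 + 2 * s)) = (-1) ^ (n + s) * r ^ s ∧
    (∀ d : ℤ, d < -((n : ℤ) - 2 + 2 * s) → P.coeff d = 0) :=
  SW_Ynrs_top_coefficients_general n hn r s P hP
end

section
/- Fix integers n ≥ 2, r ≥ 1, s ≥ 0, m ≥ 0. Work in the group algebra ℤ[ℤ × (Fin m → ℤ)] (Laurent polynomials in one variable t and m variables e₁, …, e_m), where t is the monomial with exponent (1, 0) and e_j is the monomial with exponent (0, δ_j). Let Q = (t - t⁻¹)^(n-2) * ((2r-1) + r*t² - r*t⁻²)^s * ∏_{j=1}^{m} (e_j + e_j⁻¹). Then the coefficient of Q at the exponent (n-2+2s, (1,1,…,1)) equals r^s. -/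
/-!
Grade the exponents by the total degree `k + ∑ vᵢ` of `t^k ∏ eᵢ^{vᵢ}`. Each factor of `Q` has a
single exponent of maximal degree: `t` in `t - t⁻¹`, `t²` in `(2r-1) + r t² - r t⁻²` and `eⱼ` in
`eⱼ + eⱼ⁻¹`. For such factors the top exponent of a product can be reached in only one way, so its
coefficient is the product of the top coefficients, here `1^(n-2) * r^s * 1^m`.
-/

namespace AddMonoidAlgebra

section UniqueMaxExponent

variable {R A B : Type*} [AddCommMonoid A] [AddCommMonoid B] [PartialOrder B] {D : A →+ B}

def IsUniqueMaxExponent [Semiring R] (D : A →+ B) (p : R[A]) (a : A) : Prop :=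
  ∀ x ∈ p.coeff.support, x ≠ a → D x < D a

section Semiring

variable [Semiring R] {p q : R[A]} {a b : A}

theorem IsUniqueMaxExponent.le_of_mem_support (hp : IsUniqueMaxExponent D p a) {x : A}
    (hx : x ∈ p.coeff.support) : D x ≤ D a := by
  rcases eq_or_ne x a with rfl | hxa
  exacts [le_rfl, (hp x hx hxa).le]

theorem isUniqueMaxExponent_single (a : A) (r : R) :
    IsUniqueMaxExponent D (single a r) a := fun _ hx hxa =>
  absurd (Finset.mem_singleton.mp (Finsupp.support_single_subset hx)) hxa

theorem isUniqueMaxExponent_single_of_lt {a b : A} (h : D b < D a) (r : R) :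
    IsUniqueMaxExponent D (single b r) a := fun _ hx _ =>
  Finset.mem_singleton.mp (Finsupp.support_single_subset hx) ▸ h

theorem isUniqueMaxExponent_one : IsUniqueMaxExponent D (1 : R[A]) 0 :=
  isUniqueMaxExponent_single 0 1

theorem IsUniqueMaxExponent.add (hp : IsUniqueMaxExponent D p a)
    (hq : IsUniqueMaxExponent D q a) : IsUniqueMaxExponent D (p + q) a := fun x hx => by
  classical
  rw [coeff_add] at hx
  rcases Finset.mem_union.mp (Finsupp.support_add hx) with h | h
  exacts [hp x h, hq x h]

end Semiring

theorem IsUniqueMaxExponent.sub [Ring R] {p q : R[A]} (hp : IsUniqueMaxExponent D p a)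
    (hq : IsUniqueMaxExponent D q a) : IsUniqueMaxExponent D (p - q) a := fun x hx => by
  classical
  rw [coeff_sub] at hx
  rcases Finset.mem_union.mp (Finsupp.support_sub hx) with h | h
  exacts [hp x h, hq x h]

variable [IsOrderedCancelAddMonoid B]

section Semiring

variable [Semiring R] {p q : R[A]} {a b : A}

theorem IsUniqueMaxExponent.map_add_lt (hp : IsUniqueMaxExponent D p a)
    (hq : IsUniqueMaxExponent D q b) {x y : A} (hx : x ∈ p.coeff.support)
    (hy : y ∈ q.coeff.support) (hne : ¬(x = a ∧ y = b)) : D (x + y) < D (a + b) := by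
  rw [map_add, map_add]
  rcases not_and_or.mp hne with hxa | hyb
  · exact add_lt_add_of_lt_of_le (hp x hx hxa) (hq.le_of_mem_support hy)
  · exact add_lt_add_of_le_of_lt (hp.le_of_mem_support hx) (hq y hy hyb)

theorem IsUniqueMaxExponent.uniqueAdd (hp : IsUniqueMaxExponent D p a)
    (hq : IsUniqueMaxExponent D q b) : UniqueAdd p.coeff.support q.coeff.support a b :=
  fun _ _ hx hy hxy => by_contra fun hne => (hp.map_add_lt hq hx hy hne).ne (congrArg D hxy)

theorem IsUniqueMaxExponent.coeff_mul (hp : IsUniqueMaxExponent D p a)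
    (hq : IsUniqueMaxExponent D q b) : (p * q).coeff (a + b) = p.coeff a * q.coeff b :=
  coeff_mul_add_of_uniqueAdd (hp.uniqueAdd hq)

theorem IsUniqueMaxExponent.mul (hp : IsUniqueMaxExponent D p a)
    (hq : IsUniqueMaxExponent D q b) : IsUniqueMaxExponent D (p * q) (a + b) := by
  classical
  intro z hz hne
  obtain ⟨x, hx, y, hy, rfl⟩ := Finset.mem_add.mp (support_coeff_mul_subset p q hz)
  exact hp.map_add_lt hq hx hy fun ⟨hxa, hyb⟩ => hne (hxa ▸ hyb ▸ rfl)

theorem IsUniqueMaxExponent.pow (hp : IsUniqueMaxExponent D p a) (k : ℕ) :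
    IsUniqueMaxExponent D (p ^ k) (k • a) := by
  induction k with
  | zero => simpa using isUniqueMaxExponent_one
  | succ k ih => simpa [pow_succ, succ_nsmul] using ih.mul hp

theorem IsUniqueMaxExponent.coeff_pow (hp : IsUniqueMaxExponent D p a) (k : ℕ) :
    (p ^ k).coeff (k • a) = p.coeff a ^ k := by
  induction k with
  | zero => simp [one_def, coeff_single]
  | succ k ih => rw [pow_succ, succ_nsmul, (hp.pow k).coeff_mul hp, ih, pow_succ]

end Semiring

section CommSemiring

variable [CommSemiring R] {ι : Type*} (s : Finset ι) {f : ι → R[A]} {a : ι → A}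

theorem isUniqueMaxExponent_prod (h : ∀ i ∈ s, IsUniqueMaxExponent D (f i) (a i)) :
    IsUniqueMaxExponent D (∏ i ∈ s, f i) (∑ i ∈ s, a i) := by
  induction s using Finset.cons_induction with
  | empty => simpa using isUniqueMaxExponent_one
  | cons i s his ih =>
    rw [Finset.prod_cons, Finset.sum_cons]
    exact (h i (s.mem_cons_self i)).mul (ih fun j hj => h j (Finset.mem_cons_of_mem hj))

theorem coeff_prod_of_isUniqueMaxExponent (h : ∀ i ∈ s, IsUniqueMaxExponent D (f i) (a i)) :
    (∏ i ∈ s, f i).coeff (∑ i ∈ s, a i) = ∏ i ∈ s, (f i).coeff (a i) := by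
  induction s using Finset.cons_induction with
  | empty => simp [one_def, coeff_single]
  | cons i s his ih =>
    have hs : ∀ j ∈ s, IsUniqueMaxExponent D (f j) (a j) := fun j hj =>
      h j (Finset.mem_cons_of_mem hj)
    rw [Finset.prod_cons, Finset.sum_cons, Finset.prod_cons,
      (h i (s.mem_cons_self i)).coeff_mul (isUniqueMaxExponent_prod s hs), ih hs]

end CommSemiring

end UniqueMaxExponent

end AddMonoidAlgebra

open AddMonoidAlgebra

def totalDegree (m : ℕ) : ℤ × (Fin m → ℤ) →+ ℤ :=
  AddMonoidHom.mk' (fun x => x.1 + ∑ i, x.2 i) fun x y => by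
    simp only [Prod.fst_add, Prod.snd_add, Pi.add_apply, Finset.sum_add_distrib]
    ring

@[simp]
theorem totalDegree_apply {m : ℕ} (x : ℤ × (Fin m → ℤ)) : totalDegree m x = x.1 + ∑ i, x.2 i :=
  rfl

theorem top_exponent_eq_sum {n : ℕ} (hn : 2 ≤ n) (s m : ℕ) :
    (((n : ℤ) - 2 + 2 * s), fun _ => 1) = ((n - 2) • ((1 : ℤ), (0 : Fin m → ℤ)) +
      s • ((2 : ℤ), (0 : Fin m → ℤ))) + ∑ j : Fin m, ((0 : ℤ), Pi.single j (1 : ℤ)) := by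
  refine Prod.ext ?_ ?_
  · simp [Prod.fst_sum, Nat.cast_sub hn]
    ring
  · simp [Prod.snd_sum, Finset.univ_sum_single]

theorem SW_blowup_top_coefficient_general (n : ℕ) (hn : 2 ≤ n) (r : ℤ) (s m : ℕ)
    (t tinv : AddMonoidAlgebra ℤ (ℤ × (Fin m → ℤ)))
    (e einv : Fin m → AddMonoidAlgebra ℤ (ℤ × (Fin m → ℤ)))
    (ht : t = AddMonoidAlgebra.single ((1 : ℤ), (0 : Fin m → ℤ)) 1)
    (htinv : tinv = AddMonoidAlgebra.single ((-1 : ℤ), (0 : Fin m → ℤ)) 1)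
    (he : ∀ j : Fin m, e j = AddMonoidAlgebra.single ((0 : ℤ), Pi.single j (1 : ℤ)) 1)
    (heinv : ∀ j : Fin m, einv j = AddMonoidAlgebra.single ((0 : ℤ), Pi.single j (-1 : ℤ)) 1)
    (Q : AddMonoidAlgebra ℤ (ℤ × (Fin m → ℤ)))
    (hQ : Q = (t - tinv) ^ (n - 2) *
      (((2 * r - 1 : ℤ) : AddMonoidAlgebra ℤ (ℤ × (Fin m → ℤ))) +
        r • (t ^ 2) - r • (tinv ^ 2)) ^ s *
      ∏ j : Fin m, (e j + einv j)) :
    Q.coeff (((n : ℤ) - 2 + 2 * s), fun _ => 1) = r ^ s := by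
  have h₁ : IsUniqueMaxExponent (totalDegree m) (t - tinv) (1, 0) := by
    subst ht htinv
    exact (isUniqueMaxExponent_single _ _).sub (isUniqueMaxExponent_single_of_lt (by simp) _)
  have h₂ : IsUniqueMaxExponent (totalDegree m)
      (((2 * r - 1 : ℤ) : AddMonoidAlgebra ℤ (ℤ × (Fin m → ℤ))) + r • t ^ 2 - r • tinv ^ 2)
      (2, 0) := by
    subst ht htinv
    rw [intCast_def, single_pow, single_pow, smul_single, smul_single]
    refine ((isUniqueMaxExponent_single_of_lt (by simp) _).add ?_).sub
      (isUniqueMaxExponent_single_of_lt (by simp) _)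
    simpa using isUniqueMaxExponent_single _ _
  have h₃ (j : Fin m) : IsUniqueMaxExponent (totalDegree m) (e j + einv j) (0, Pi.single j 1) := by
    rw [he, heinv]
    exact (isUniqueMaxExponent_single _ _).add (isUniqueMaxExponent_single_of_lt (by simp) _)
  rw [hQ, top_exponent_eq_sum hn, ((h₁.pow _).mul (h₂.pow _)).coeff_mul
      (isUniqueMaxExponent_prod _ fun j _ => h₃ j), (h₁.pow _).coeff_mul (h₂.pow _),
    h₁.coeff_pow, h₂.coeff_pow, coeff_prod_of_isUniqueMaxExponent _ fun j _ => h₃ j]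
  simp only [ht, htinv, he, heinv, intCast_def, single_pow, smul_single]
  simp [coeff_single, Prod.ext_iff]

/-- Work in the group algebra `ℤ[ℤ × (Fin m → ℤ)]`, Laurent polynomials in one variable `t`
(the monomial with exponent `(1, 0)`) and `m` variables `e j` (the monomials with exponent
`(0, δ_j)`).  For `n ≥ 2`, `r ≥ 1`, `s ≥ 0`, `m ≥ 0`, the blown-up Seiberg–Witten polynomial
`Q = (t - t⁻¹)^(n-2) * ((2r-1) + r t² - r t⁻²)^s * ∏_j (e j + (e j)⁻¹)` has coefficient `r^s`
at the top exponent `(n-2+2s, (1,…,1))`. -/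
theorem SW_blowup_top_coefficient (n : ℕ) (hn : 2 ≤ n) (r : ℤ) (hr : 1 ≤ r) (s m : ℕ)
    (t tinv : AddMonoidAlgebra ℤ (ℤ × (Fin m → ℤ)))
    (e einv : Fin m → AddMonoidAlgebra ℤ (ℤ × (Fin m → ℤ)))
    (ht : t = AddMonoidAlgebra.single ((1 : ℤ), (0 : Fin m → ℤ)) 1)
    (htinv : tinv = AddMonoidAlgebra.single ((-1 : ℤ), (0 : Fin m → ℤ)) 1)
    (he : ∀ j : Fin m, e j = AddMonoidAlgebra.single ((0 : ℤ), Pi.single j (1 : ℤ)) 1)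
    (heinv : ∀ j : Fin m, einv j = AddMonoidAlgebra.single ((0 : ℤ), Pi.single j (-1 : ℤ)) 1)
    (Q : AddMonoidAlgebra ℤ (ℤ × (Fin m → ℤ)))
    (hQ : Q = (t - tinv) ^ (n - 2) *
      (((2 * r - 1 : ℤ) : AddMonoidAlgebra ℤ (ℤ × (Fin m → ℤ))) +
        r • (t ^ 2) - r • (tinv ^ 2)) ^ s *
      ∏ j : Fin m, (e j + einv j)) :
    Q.coeff (((n : ℤ) - 2 + 2 * s), fun _ => 1) = r ^ s :=
  SW_blowup_top_coefficient_general n hn r s m t tinv e einv ht htinv he heinv Q hQ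
end
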